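/- Let G be a finite group, N ≤ G a subgroup of index 2, and I a finite G-set of odd cardinality r with r′ orbits, such that N acts transitively on each G-orbit of I. Let M be the G-lattice with ℤ-basis {e_i : i ∈ I} ∪ {f} and G-action given by: for σ ∈ N, σ·e_i = e_{σ·i} and σ·f = f; for σ ∈ G∖N, σ·e_i = −e_{σ·i} and σ·f = f − Σ_{i∈I} e_i. Then the first group cohomology H¹(G, M) is isomorphic as an abelian group to (ℤ/2ℤ)^{r′−1}. -/

import Mathlib

/-!
The second component of a 1-cocycle `f` is a homomorphism from a finite group to `ℤ`, hence
zero, so the first component of `f` is a cocycle for the sign-twisted permutation module `ℤ^I`.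
On the stabiliser of a point `i` it vanishes on `N` and is constant off `N` (`N` has index 2);
since `N` is transitive on orbits, the stabiliser meets `G ∖ N`, and that constant mod 2 is an
invariant of the orbit of `i`. A cocycle vanishing on the stabilisers of orbit representatives is
a coboundary (Shapiro's lemma by hand), while the coboundary of `(v, c)` has invariant `c mod 2` on
every orbit. So `f` is a coboundary iff all its invariants are equal, and as every vector of
invariants is attained (by `σ ↦ [σ ∉ N] c`), `H¹ ≅ (ℤ/2)^{r'} / ⟨(1, …, 1)⟩ ≅ (ℤ/2)^{r' - 1}`.
-/

open groupCohomology MulAction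

universe u

theorem Subgroup.eq_zero_of_map_mul_eq_add {G : Type*} [Group G] [Finite G] (H : Subgroup G)
    {c : G → ℤ} (hc : ∀ a ∈ H, ∀ b ∈ H, c (a * b) = c a + c b) {g : G} (hg : g ∈ H) :
    c g = 0 := by
  have hc1 : c 1 = 0 := by simpa using hc 1 H.one_mem 1 H.one_mem
  have hpow : ∀ n : ℕ, c (g ^ n) = n * c g := by
    intro n
    induction n with
    | zero => simpa using hc1
    | succ n ih =>
      rw [pow_succ, hc _ (H.pow_mem hg n) _ hg, ih]
      push_cast
      ring
  have h := hpow (orderOf g)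
  rw [pow_orderOf_eq_one, hc1, eq_comm, mul_eq_zero] at h
  exact h.resolve_left (by exact_mod_cast (orderOf_pos g).ne')

theorem nonempty_quotient_span_one_linearEquiv (K Ω : Type*) [Field K] [Finite Ω] :
    Nonempty (((Ω → K) ⧸ K ∙ (1 : Ω → K)) ≃ₗ[K] (Fin (Nat.card Ω - 1) → K)) := by
  have := Fintype.ofFinite Ω
  refine ⟨LinearEquiv.ofFinrankEq _ _ ?_⟩
  rw [Submodule.finrank_quotient, Module.finrank_fintype_fun_eq_card, Module.finrank_fin_fun,
    Nat.card_eq_fintype_card]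
  rcases isEmpty_or_nonempty Ω with hΩ | hΩ
  · simp
  · rw [finrank_span_singleton one_ne_zero]

theorem cocycles₁_map_mul {k G V : Type u} [CommRing k] [Group G] [AddCommGroup V] [Module k V]
    {ρ : Representation k G V} (f : cocycles₁ (Rep.of ρ)) (a b : G) :
    f (a * b) = ρ a (f b) + f a :=
  (mem_cocycles₁_iff f).1 f.2 a b

theorem nonempty_H1_addEquiv_of_surjective {k G : Type u} [CommRing k] [Group G] {A : Rep k G}
    {Q : Type*} [AddCommGroup Q] (φ : cocycles₁ A →+ Q) (hφ : Function.Surjective φ)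
    (hker : ∀ f, φ f = 0 ↔ ⇑f ∈ coboundaries₁ A) : Nonempty (H1 A ≃+ Q) := by
  have hπ : Function.Surjective (H1π A) := fun y => H1_induction_on y fun x => ⟨x, rfl⟩
  have hker' : (H1π A).hom.toAddMonoidHom.ker = φ.ker := by
    ext f
    exact (H1π_eq_zero_iff f).trans (hker f).symm
  exact ⟨(QuotientAddGroup.quotientKerEquivOfSurjective _ hπ).symm.trans
    ((QuotientAddGroup.quotientAddEquivOfEq hker').trans
      (QuotientAddGroup.quotientKerEquivOfSurjective φ hφ))⟩

variable {G : Type} [Group G] {N : Subgroup G} {I : Type} [MulAction G I]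

open scoped Classical in
noncomputable def Subgroup.sign (N : Subgroup G) (σ : G) : ℤ := if σ ∈ N then 1 else -1

theorem Subgroup.sign_of_mem {σ : G} (hσ : σ ∈ N) : N.sign σ = 1 := if_pos hσ

theorem Subgroup.sign_of_notMem {σ : G} (hσ : σ ∉ N) : N.sign σ = -1 := if_neg hσ

theorem exists_notMem_smul_eq_self (hN : N.index = 2)
    (htrans : ∀ i j : I, j ∈ orbit G i → ∃ σ ∈ N, σ • i = j) (i : I) :
    ∃ g ∉ N, g • i = i := by
  obtain ⟨g₀, hg₀, -⟩ := Subgroup.index_eq_two_iff_exists_notMem_and.mp hN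
  obtain ⟨n, hn, hni⟩ := htrans i (g₀ • i) (mem_orbit i g₀)
  refine ⟨n⁻¹ * g₀, fun h => hg₀ ?_, by rw [mul_smul, ← hni, inv_smul_smul]⟩
  simpa using N.mul_mem hn h

theorem exists_smul_out_eq (j : I) : ∃ τ : G, τ • (⟦j⟧ : orbitRel.Quotient G I).out = j := by
  obtain ⟨g, hg⟩ := Quotient.exact (Quotient.out_eq (⟦j⟧ : orbitRel.Quotient G I))
  exact ⟨g⁻¹, by rw [inv_smul_eq_iff, ← hg]⟩

structure IsTwistedPermLattice (N : Subgroup G) (ρ : Representation ℤ G ((I → ℤ) × ℤ)) :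
    Prop where
  apply_of_mem : ∀ σ ∈ N, ∀ (v : I → ℤ) (c : ℤ), ρ σ (v, c) = (fun j => v (σ⁻¹ • j), c)
  apply_of_notMem : ∀ σ ∉ N, ∀ (v : I → ℤ) (c : ℤ),
    ρ σ (v, c) = (fun j => -v (σ⁻¹ • j) - c, c)

/-- For `s O ∉ N` fixing `O.out`, the value does not depend on the choice of `s O`
(`IsTwistedPermLattice.cocycle_fst_eq_of_notMem`). -/
noncomputable def cocycleParity (ρ : Representation ℤ G ((I → ℤ) × ℤ))
    (s : orbitRel.Quotient G I → G) :
    cocycles₁ (Rep.of ρ) →+ (orbitRel.Quotient G I → ZMod 2) where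
  toFun f O := ((f (s O)).1 O.out : ZMod 2)
  map_zero' := rfl
  map_add' _ _ := funext fun _ => Int.cast_add _ _

@[simp]
theorem cocycleParity_apply (ρ : Representation ℤ G ((I → ℤ) × ℤ))
    (s : orbitRel.Quotient G I → G) (f : cocycles₁ (Rep.of ρ)) (O : orbitRel.Quotient G I) :
    cocycleParity ρ s f O = ((f (s O)).1 O.out : ZMod 2) :=
  rfl

open scoped Classical in
noncomputable def orbitCocycle (N : Subgroup G) (c : orbitRel.Quotient G I → ℤ) (σ : G) :
    (I → ℤ) × ℤ :=
  (fun j => if σ ∈ N then 0 else c ⟦j⟧, 0)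

namespace IsTwistedPermLattice

variable {ρ : Representation ℤ G ((I → ℤ) × ℤ)} {s : orbitRel.Quotient G I → G}

theorem snd_apply (hρ : IsTwistedPermLattice N ρ) (σ : G) (x : (I → ℤ) × ℤ) :
    (ρ σ x).2 = x.2 := by
  by_cases hσ : σ ∈ N
  · rw [← Prod.mk.eta (p := x), hρ.apply_of_mem σ hσ]
  · rw [← Prod.mk.eta (p := x), hρ.apply_of_notMem σ hσ]

theorem fst_apply_of_mem (hρ : IsTwistedPermLattice N ρ) {σ : G} (hσ : σ ∈ N)
    (x : (I → ℤ) × ℤ) (j : I) : (ρ σ x).1 j = x.1 (σ⁻¹ • j) := by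
  rw [← Prod.mk.eta (p := x), hρ.apply_of_mem σ hσ]

theorem fst_apply_of_notMem (hρ : IsTwistedPermLattice N ρ) {σ : G} (hσ : σ ∉ N)
    (x : (I → ℤ) × ℤ) (j : I) : (ρ σ x).1 j = -x.1 (σ⁻¹ • j) - x.2 := by
  rw [← Prod.mk.eta (p := x), hρ.apply_of_notMem σ hσ]

theorem fst_apply_of_snd_eq_zero (hρ : IsTwistedPermLattice N ρ) {x : (I → ℤ) × ℤ}
    (hx : x.2 = 0) (σ : G) (j : I) : (ρ σ x).1 j = N.sign σ * x.1 (σ⁻¹ • j) := by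
  by_cases hσ : σ ∈ N
  · rw [hρ.fst_apply_of_mem hσ, N.sign_of_mem hσ, one_mul]
  · rw [hρ.fst_apply_of_notMem hσ, hx, N.sign_of_notMem hσ]
    ring

theorem orbitCocycle_mem_cocycles₁ (hρ : IsTwistedPermLattice N ρ) (hN : N.index = 2)
    (c : orbitRel.Quotient G I → ℤ) : orbitCocycle N c ∈ cocycles₁ (Rep.of ρ) := by
  rw [mem_cocycles₁_iff]
  intro g h
  refine Prod.ext (funext fun j => ?_) (by simp [orbitCocycle, hρ.snd_apply])
  have hmul := Subgroup.mul_mem_iff_of_index_two hN (a := g) (b := h)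
  by_cases hg : g ∈ N <;> by_cases hh : h ∈ N <;>
    simp [orbitCocycle, hρ.fst_apply_of_mem, hρ.fst_apply_of_notMem, hg, hh, hmul]

theorem cocycleParity_surjective (hρ : IsTwistedPermLattice N ρ) (hN : N.index = 2)
    (hs : ∀ O, s O ∉ N) : Function.Surjective (cocycleParity ρ s) := by
  intro a
  obtain ⟨c, rfl⟩ := ZMod.intCast_surjective.comp_left a
  refine ⟨⟨orbitCocycle N c, hρ.orbitCocycle_mem_cocycles₁ hN c⟩, funext fun O => ?_⟩
  exact (by simp [orbitCocycle, hs O] : ((orbitCocycle N c (s O)).1 O.out : ZMod 2) = c O)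

theorem exists_cocycleParity_eq_of_mem_coboundaries₁ (hρ : IsTwistedPermLattice N ρ)
    (hs : ∀ O, s O ∉ N ∧ s O • O.out = O.out) (f : cocycles₁ (Rep.of ρ))
    (hf : ⇑f ∈ coboundaries₁ (Rep.of ρ)) : ∃ a : ZMod 2, ∀ O, cocycleParity ρ s f O = a := by
  obtain ⟨x, hx⟩ := hf
  refine ⟨x.2, fun O => ?_⟩
  have hfO : (f (s O)).1 O.out = x.2 + 2 * (-x.1 O.out - x.2) := by
    rw [← hx]
    show (ρ (s O) x).1 O.out - x.1 O.out = _
    rw [hρ.fst_apply_of_notMem (hs O).1, inv_smul_eq_iff.mpr (hs O).2.symm]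
    ring
  rw [cocycleParity_apply, hfO]
  push_cast
  rw [show (2 : ZMod 2) = 0 from rfl, zero_mul, add_zero]

variable [Finite G]

theorem cocycle_snd_eq_zero (hρ : IsTwistedPermLattice N ρ) (f : cocycles₁ (Rep.of ρ))
    (σ : G) : (f σ).2 = 0 :=
  (⊤ : Subgroup G).eq_zero_of_map_mul_eq_add (c := fun g => (f g).2)
    (fun a _ b _ => by rw [cocycles₁_map_mul, Prod.snd_add, hρ.snd_apply, add_comm]) trivial

theorem cocycle_fst_mul (hρ : IsTwistedPermLattice N ρ) (f : cocycles₁ (Rep.of ρ))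
    (σ τ : G) (j : I) : (f (σ * τ)).1 j = (f σ).1 j + N.sign σ * (f τ).1 (σ⁻¹ • j) := by
  rw [cocycles₁_map_mul, Prod.fst_add, Pi.add_apply,
    hρ.fst_apply_of_snd_eq_zero (hρ.cocycle_snd_eq_zero f τ), add_comm]

theorem cocycle_fst_eq_zero_of_mem (hρ : IsTwistedPermLattice N ρ) (f : cocycles₁ (Rep.of ρ))
    {g : G} (hg : g ∈ N) {i : I} (hgi : g • i = i) : (f g).1 i = 0 :=
  (stabilizer G i ⊓ N).eq_zero_of_map_mul_eq_add (c := fun g => (f g).1 i)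
    (fun a ha b _ => by
      rw [hρ.cocycle_fst_mul, inv_smul_eq_iff.mpr ha.1.symm, N.sign_of_mem ha.2, one_mul])
    ⟨hgi, hg⟩

theorem cocycle_fst_eq_of_notMem (hρ : IsTwistedPermLattice N ρ) (hN : N.index = 2)
    (f : cocycles₁ (Rep.of ρ)) {g₁ g₂ : G} (h₁ : g₁ ∉ N) (h₂ : g₂ ∉ N) {i : I}
    (hi₁ : g₁ • i = i) (hi₂ : g₂ • i = i) : (f g₁).1 i = (f g₂).1 i := by
  have hmem : g₁⁻¹ * g₂ ∈ N := by
    rw [Subgroup.mul_mem_iff_of_index_two hN]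
    simp [h₁, h₂]
  have hfix : (g₁⁻¹ * g₂) • i = i := by rw [mul_smul, hi₂, inv_smul_eq_iff, hi₁]
  have h := hρ.cocycle_fst_mul f g₁ (g₁⁻¹ * g₂) i
  rwa [mul_inv_cancel_left, inv_smul_eq_iff.mpr hi₁.symm,
    hρ.cocycle_fst_eq_zero_of_mem f hmem hfix, mul_zero, add_zero, eq_comm] at h

theorem cocycle_fst_eq_of_smul_eq (hρ : IsTwistedPermLattice N ρ) (f : cocycles₁ (Rep.of ρ))
    {i j : I} (hf : ∀ g : G, g • i = i → (f g).1 i = 0) {τ τ' : G} (hτ : τ • i = j)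
    (hτ' : τ' • i = j) : (f τ).1 j = (f τ').1 j := by
  have hfix : (τ⁻¹ * τ') • i = i := by rw [mul_smul, hτ', ← hτ, inv_smul_smul]
  rw [← mul_inv_cancel_left τ τ', hρ.cocycle_fst_mul, ← hτ, inv_smul_smul, hf _ hfix, mul_zero,
    add_zero]

theorem mem_coboundaries₁_of_fst_eq_zero (hρ : IsTwistedPermLattice N ρ)
    (f : cocycles₁ (Rep.of ρ))
    (hf : ∀ (O : orbitRel.Quotient G I) (g : G), g • O.out = O.out → (f g).1 O.out = 0) :
    ⇑f ∈ coboundaries₁ (Rep.of ρ) := by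
  choose τ hτ using exists_smul_out_eq (G := G) (I := I)
  refine ⟨(fun j => -(f (τ j)).1 j, 0), funext fun σ => Prod.ext (funext fun j => ?_) ?_⟩
  · have hO : (⟦σ⁻¹ • j⟧ : orbitRel.Quotient G I) = ⟦j⟧ := orbitRel.Quotient.quotient_smul_eq
    have hwd := hρ.cocycle_fst_eq_of_smul_eq f (hf ⟦j⟧) (hO ▸ hτ (σ⁻¹ • j))
      (by rw [mul_smul, hτ j] : (σ⁻¹ * τ j) • (⟦j⟧ : orbitRel.Quotient G I).out = σ⁻¹ • j)
    have hmul := hρ.cocycle_fst_mul f σ (σ⁻¹ * τ j) j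
    rw [mul_inv_cancel_left] at hmul
    show (ρ σ _).1 j - _ = _
    rw [hρ.fst_apply_of_snd_eq_zero rfl]
    dsimp only
    rw [hwd]
    linarith
  · show (ρ σ _).2 - 0 = _
    rw [hρ.snd_apply, hρ.cocycle_snd_eq_zero, sub_zero]

theorem mem_coboundaries₁_of_cocycleParity_eq (hρ : IsTwistedPermLattice N ρ)
    (hN : N.index = 2) (hs : ∀ O, s O ∉ N ∧ s O • O.out = O.out) (f : cocycles₁ (Rep.of ρ))
    (a : ZMod 2) (hf : ∀ O, cocycleParity ρ s f O = a) : ⇑f ∈ coboundaries₁ (Rep.of ρ) := by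
  obtain ⟨c, rfl⟩ := ZMod.intCast_surjective a
  have hdvd : ∀ O, ∃ m : ℤ, (f (s O)).1 O.out = c + 2 * m := fun O => by
    obtain ⟨k, hk⟩ := (ZMod.intCast_eq_intCast_iff_dvd_sub _ _ 2).1 (hf O).symm
    exact ⟨k, by push_cast at hk; linarith⟩
  choose m hm using hdvd
  -- `f` minus the coboundary of `x` vanishes on the stabilisers of the orbit representatives.
  let x : (I → ℤ) × ℤ := (fun j => -m ⟦j⟧, -c)
  have hx : (fun σ => ρ σ x - x) ∈ coboundaries₁ (Rep.of ρ) := ⟨x, rfl⟩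
  let y : cocycles₁ (Rep.of ρ) := ⟨fun σ => ρ σ x - x, coboundaries₁_le_cocycles₁ _ hx⟩
  refine ((coboundaries₁ (Rep.of ρ)).sub_mem_iff_left hx).1
    (hρ.mem_coboundaries₁_of_fst_eq_zero (f - y) fun O g hg => ?_)
  show (f g).1 O.out - ((ρ g x).1 O.out - x.1 O.out) = 0
  have hg' : g⁻¹ • O.out = O.out := inv_smul_eq_iff.mpr hg.symm
  by_cases hgN : g ∈ N
  · rw [hρ.cocycle_fst_eq_zero_of_mem f hgN hg, hρ.fst_apply_of_mem hgN, hg']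
    ring
  · rw [hρ.cocycle_fst_eq_of_notMem hN f hgN (hs O).1 hg (hs O).2, hm,
      hρ.fst_apply_of_notMem hgN, hg']
    simp only [x, Quotient.out_eq]
    ring

theorem mem_coboundaries₁_iff (hρ : IsTwistedPermLattice N ρ) (hN : N.index = 2)
    (hs : ∀ O, s O ∉ N ∧ s O • O.out = O.out) (f : cocycles₁ (Rep.of ρ)) :
    ⇑f ∈ coboundaries₁ (Rep.of ρ) ↔ ∃ a : ZMod 2, ∀ O, cocycleParity ρ s f O = a :=
  ⟨hρ.exists_cocycleParity_eq_of_mem_coboundaries₁ hs f,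
    fun ⟨a, ha⟩ => hρ.mem_coboundaries₁_of_cocycleParity_eq hN hs f a ha⟩

theorem nonempty_H1_addEquiv (hρ : IsTwistedPermLattice N ρ) (hN : N.index = 2)
    (htrans : ∀ i j : I, j ∈ orbit G i → ∃ σ ∈ N, σ • i = j) :
    Nonempty (H1 (Rep.of ρ) ≃+
      ((orbitRel.Quotient G I → ZMod 2) ⧸ ZMod 2 ∙ (1 : orbitRel.Quotient G I → ZMod 2))) := by
  choose s hs using fun O : orbitRel.Quotient G I => exists_notMem_smul_eq_self hN htrans O.out
  let π := (ZMod 2 ∙ (1 : orbitRel.Quotient G I → ZMod 2)).mkQ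
  refine nonempty_H1_addEquiv_of_surjective (π.toAddMonoidHom.comp (cocycleParity ρ s))
    ((Submodule.mkQ_surjective _).comp (hρ.cocycleParity_surjective hN fun O => (hs O).1))
    fun f => ?_
  rw [hρ.mem_coboundaries₁_iff hN hs, AddMonoidHom.comp_apply, LinearMap.toAddMonoidHom_coe,
    Submodule.mkQ_apply, Submodule.Quotient.mk_eq_zero, Submodule.mem_span_singleton]
  simp only [funext_iff, Pi.smul_apply, Pi.one_apply, smul_eq_mul, mul_one, eq_comm]

end IsTwistedPermLattice

theorem h1_odd_case_general
    (G : Type) [Group G] [Fintype G] (N : Subgroup G) (hN : N.index = 2)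
    (I : Type) [Fintype I] [MulAction G I]
    (r' : ℕ)
    (hr' : Nat.card (MulAction.orbitRel.Quotient G I) = r')
    (htrans : ∀ i j : I, j ∈ MulAction.orbit G i → ∃ σ ∈ N, σ • i = j)
    (ρ : Representation ℤ G ((I → ℤ) × ℤ))
    (hρN : ∀ σ ∈ N, ∀ (v : I → ℤ) (c : ℤ),
      ρ σ (v, c) = (fun j => v (σ⁻¹ • j), c))
    (hρ : ∀ σ ∉ N, ∀ (v : I → ℤ) (c : ℤ),
      ρ σ (v, c) = (fun j => -v (σ⁻¹ • j) - c, c)) :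
    Nonempty (groupCohomology.H1 (Rep.of ρ) ≃+ (Fin (r' - 1) → ZMod 2)) := by
  obtain ⟨e₁⟩ := IsTwistedPermLattice.nonempty_H1_addEquiv ⟨hρN, hρ⟩ hN htrans
  obtain ⟨e₂⟩ := nonempty_quotient_span_one_linearEquiv (ZMod 2) (orbitRel.Quotient G I)
  rw [hr'] at e₂
  exact ⟨e₁.trans e₂.toAddEquiv⟩

/-- First group cohomology of the lattice `M = ⟨e_i (i ∈ I), f⟩` with `σ·e_i = e_{σi}`,
`σ·f = f` for `σ ∈ N`, and `σ·e_i = −e_{σi}`, `σ·f = f − ∑ e_i` for `σ ∉ N`, where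
`|I| = r` is odd and `N` (of index 2) acts transitively on each `G`-orbit:
`H¹(G, M) ≅ (ℤ/2ℤ)^{r′−1}` with `r′` the number of orbits.
Here `M` is realised as `(I → ℤ) × ℤ`, with `e_i` the indicator of `i` and
`f = (0, 1)`. -/
theorem h1_odd_case
    (G : Type) [Group G] [Fintype G] (N : Subgroup G) (hN : N.index = 2)
    (I : Type) [Fintype I] [MulAction G I]
    (r r' : ℕ) (hr : Fintype.card I = r) (hodd : Odd r)
    (hr' : Nat.card (MulAction.orbitRel.Quotient G I) = r')
    (htrans : ∀ i j : I, j ∈ MulAction.orbit G i → ∃ σ ∈ N, σ • i = j)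
    (ρ : Representation ℤ G ((I → ℤ) × ℤ))
    (hρN : ∀ σ ∈ N, ∀ (v : I → ℤ) (c : ℤ),
      ρ σ (v, c) = (fun j => v (σ⁻¹ • j), c))
    (hρ : ∀ σ ∉ N, ∀ (v : I → ℤ) (c : ℤ),
      ρ σ (v, c) = (fun j => -v (σ⁻¹ • j) - c, c)) :
    Nonempty (groupCohomology.H1 (Rep.of ρ) ≃+ (Fin (r' - 1) → ZMod 2)) :=
  h1_odd_case_general G N hN I r' hr' htrans ρ hρN hρ
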